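/- Let J ⊆ S be a squarefree monomial ideal and let w in S be a squarefree monomial such that no variable dividing w divides any minimal monomial generator of J, and set I = wJ (a squarefree monomial ideal). Then I^(k) = I^k for all integers k >= 1 if and only if J^(k) = J^k for all integers k >= 1. -/

import Mathlib

open Finset MvPolynomial

/-! Common definitions for principal vector-spread Borel ideals
(Crupi–Ficarra–Lax, "Principal vector-spread Borel ideals").

Throughout, `S = K[x_1,…,x_n]` is realized as `MvPolynomial (Fin n) K`, and the
variable `x_p` (1-based position `p ∈ [1,n]`) is `X (p-1)`. -/

/-- The variable `x_p` of `K[x_1,…,x_n]`, for a 1-based position `p ∈ [1,n]`. -/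
noncomputable def xv (K : Type*) [Field K] (n : ℕ) [NeZero n] (p : ℕ) :
    MvPolynomial (Fin n) K := MvPolynomial.X (Fin.ofNat n (p - 1 : ℕ))

/-- The squarefree monomial `x_{i 1} ⋯ x_{i e}` determined by the index function `i`. -/
noncomputable def monOf (K : Type*) [Field K] (n : ℕ) [NeZero n] (e : ℕ) (i : ℕ → ℕ) :
    MvPolynomial (Fin n) K := ∏ r ∈ Finset.Icc 1 e, xv K n (i r)

/-- Index functions of the `t`-spread monomials `x_{i 1} ⋯ x_{i e}` with `i r ≤ J r` for
all `r = 1,…,e`.  (These monomials form the minimal monomial generating set of the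
principal `t`-spread Borel ideal `B_t(x_{J 1} ⋯ x_{J e})`.) -/
def spreadIdx (e : ℕ) (t J : ℕ → ℕ) : Set (ℕ → ℕ) :=
  {i | (∀ r, 1 ≤ r → r ≤ e → 1 ≤ i r ∧ i r ≤ J r) ∧
    (∀ r, 1 ≤ r → r + 1 ≤ e → i r + t r ≤ i (r + 1))}

/-- The principal `t`-spread Borel ideal `B_t(x_{J 1} ⋯ x_{J e})`: the ideal generated by
all `t`-spread monomials `x_{i 1} ⋯ x_{i e}` with `i r ≤ J r` for all `r`. -/
noncomputable def tBorel (K : Type*) [Field K] (n : ℕ) [NeZero n] (e : ℕ) (t J : ℕ → ℕ) :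
    Ideal (MvPolynomial (Fin n) K) :=
  Ideal.span ((fun i => monOf K n e i) '' spreadIdx e t J)

/-- The monomial prime ideal `P_A = (x_p : p ∈ A)`, for a set `A` of 1-based positions. -/
noncomputable def pA (K : Type*) [Field K] (n : ℕ) [NeZero n] (A : Set ℕ) :
    Ideal (MvPolynomial (Fin n) K) := Ideal.span (xv K n '' A)

/-- The `t`-spread support `supp_t(x_{i 1} ⋯ x_{i e}) = ⋃_{s=1}^{e-1} [i s, i s + t s - 1]`. -/
def tSupp (e : ℕ) (t : ℕ → ℕ) (i : ℕ → ℕ) : Set ℕ :=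
  ⋃ s ∈ Finset.Icc 1 (e - 1), Set.Icc (i s) (i s + t s - 1)

/-- The `k`-th symbolic power of a (squarefree monomial) ideal: the intersection of the
`k`-th powers of its minimal primes. -/
noncomputable def symbPow {R : Type*} [CommRing R] (I : Ideal R) (k : ℕ) : Ideal R :=
  ⨅ P ∈ I.minimalPrimes, P ^ k

/-- The Alexander dual `⨅_{v} P_{supp v}` of the squarefree monomial ideal whose minimal
monomial generators are the degree `e` squarefree monomials indexed by `gen`. -/
noncomputable def alexDualOf (K : Type*) [Field K] (n : ℕ) [NeZero n] (e : ℕ)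
    (gen : Set (ℕ → ℕ)) : Ideal (MvPolynomial (Fin n) K) :=
  ⨅ i ∈ gen, pA K n (i '' Set.Icc 1 e)

/-- The height of an ideal: the infimum of the heights of its minimal primes, the height
of a prime being its height in the poset of prime ideals. -/
noncomputable def idealHeight {R : Type*} [CommRing R] (I : Ideal R) : ℕ∞ :=
  ⨅ (p : PrimeSpectrum R) (_ : p.asIdeal ∈ I.minimalPrimes), Order.height p

/-- The depth of the module `M` with respect to the ideal `P`: the supremum of the lengths
of `M`-regular sequences consisting of elements of `P`. -/
noncomputable def depthWrt (R : Type*) (M : Type*) [CommRing R] [AddCommGroup M]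
    [Module R M] (P : Ideal R) : ℕ∞ :=
  ⨆ (k : ℕ) (_ : ∃ x : Fin k → R, (∀ a, x a ∈ P) ∧
    RingTheory.Sequence.IsRegular M (List.ofFn x)), (k : ℕ∞)

/-- The (Krull) dimension of a module `M`: the Krull dimension of `R / ann M`. -/
noncomputable def modKrullDim (R : Type*) (M : Type*) [CommRing R] [AddCommGroup M]
    [Module R M] : WithBot ℕ∞ := ringKrullDim (R ⧸ Module.annihilator R M)

/-- A module is Cohen–Macaulay (with respect to the ideal `P`, e.g. the graded maximal
ideal) if its depth equals its Krull dimension. -/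
def IsCohenMacaulayMod (R : Type*) (M : Type*) [CommRing R] [AddCommGroup M] [Module R M]
    (P : Ideal R) : Prop := (depthWrt R M P : WithBot ℕ∞) = modKrullDim R M

/-- The depth of a local ring: max length of a regular sequence in the maximal ideal. -/
noncomputable def ringDepth (A : Type*) [CommRing A] [IsLocalRing A] : ℕ∞ :=
  depthWrt A A (IsLocalRing.maximalIdeal A)

/-- A local ring is Cohen–Macaulay if its depth equals its Krull dimension. -/
def IsCohenMacaulayLocalRing (A : Type*) [CommRing A] [IsLocalRing A] : Prop :=
  (ringDepth A : WithBot ℕ∞) = ringKrullDim A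

/-- A (commutative Noetherian) ring is Cohen–Macaulay if all its localizations at prime
ideals are Cohen–Macaulay local rings. -/
def IsCohenMacaulayRing (A : Type*) [CommRing A] : Prop :=
  ∀ (P : Ideal A) (hP : P.IsPrime), haveI := hP
    IsCohenMacaulayLocalRing (Localization.AtPrime P)

/-- The analytic spread of `I`: the Krull dimension of `R(I)/m R(I)`, where `R(I)` is the
Rees algebra of `I` and `m` the (graded maximal) ideal. -/
noncomputable def analyticSpread {R : Type*} [CommRing R] (m I : Ideal R) : WithBot ℕ∞ :=
  ringKrullDim (↥(reesAlgebra I) ⧸ Ideal.map (algebraMap R ↥(reesAlgebra I)) m)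

/-- `{p,q}` is an edge of the linear relation graph of the monomial ideal whose minimal
generators are the degree `e` squarefree monomials indexed by `gen` (positions 1-based,
within `[1,n]`). -/
def lrEdge (K : Type*) [Field K] (n : ℕ) [NeZero n] (e : ℕ) (gen : Set (ℕ → ℕ))
    (p q : ℕ) : Prop :=
  1 ≤ p ∧ p ≤ n ∧ 1 ≤ q ∧ q ≤ n ∧ p ≠ q ∧
    ∃ i ∈ gen, ∃ i' ∈ gen, xv K n p * monOf K n e i = xv K n q * monOf K n e i'

/-- A facet of a simplicial complex: a maximal face. -/
def isFacet (Δ : Set (Finset ℕ)) (F : Finset ℕ) : Prop :=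
  F ∈ Δ ∧ ∀ G ∈ Δ, F ⊆ G → F = G

/-- Vertex decomposability of a simplicial complex (faces as finsets of vertices):
either a simplex (including the void complex and `{∅}`), or there is a vertex whose
deletion and link are vertex decomposable and every facet of the deletion is a facet. -/
inductive VDecomp : Set (Finset ℕ) → Prop
  | empty : VDecomp ∅
  | simplex (A : Finset ℕ) : VDecomp {F | F ⊆ A}
  | step (Δ : Set (Finset ℕ)) (v : ℕ) (hv : ∃ F ∈ Δ, v ∈ F)
      (hdel : VDecomp {F ∈ Δ | v ∉ F})
      (hlink : VDecomp {F | F ∈ Δ ∧ v ∉ F ∧ insert v F ∈ Δ})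
      (hfac : ∀ F, isFacet {F ∈ Δ | v ∉ F} F → isFacet Δ F) : VDecomp Δ

/-- The `a`-th layer `J (a+1) / J a` of a filtration of ideals, as an `R`-module. -/
abbrev layerOf {R : Type*} [CommRing R] {r : ℕ} (J : Fin (r + 1) → Ideal R) (a : Fin r) :=
  ↥(J a.succ) ⧸ (Submodule.comap (J a.succ).subtype (J a.castSucc))

/-! The minimal primes of `w J` are the `(x_b)`, `b ∈ B`, together with the minimal primes of `J`,
and the latter are generated by variables outside `B`. Hence
`I^(k) = (⋂_b (x_b^k)) ∩ J^(k) = (w^k) ∩ J^(k)`, and since `w^k` is a nonzerodivisor modulo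
`P^k` for every monomial prime `P` avoiding `B`, this is `w^k J^(k)`. As `I^k = w^k J^k` and
multiplication by the nonzero `w^k` is injective on ideals, `I^(k) = I^k` iff `J^(k) = J^k`. -/

namespace Ideal

variable {R : Type*} [CommRing R] {I J P : Ideal R}

theorem minimalPrimes_mul_subset :
    (I * J).minimalPrimes ⊆ I.minimalPrimes ∪ J.minimalPrimes := by
  intro P hP
  have := hP.1.1
  have minimal_of_le {L : Ideal R} (hL : I * J ≤ L) (hLP : L ≤ P) : P ∈ L.minimalPrimes := by
    obtain ⟨Q, hQ, hQP⟩ := exists_minimalPrimes_le hLP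
    rwa [le_antisymm (hP.2 ⟨hQ.1.1, hL.trans hQ.1.2⟩ hQP) hQP]
  rcases this.mul_le.mp hP.1.2 with hIP | hJP
  · exact .inl (minimal_of_le mul_le_left hIP)
  · exact .inr (minimal_of_le mul_le_right hJP)

theorem mem_minimalPrimes_mul_of_mem_minimalPrimes_left (hP : P ∈ I.minimalPrimes)
    (hJ : ∀ Q ∈ J.minimalPrimes, ¬Q ≤ P) : P ∈ (I * J).minimalPrimes := by
  refine ⟨⟨hP.1.1, mul_le_left.trans hP.1.2⟩, fun Q ⟨hQ, hIJQ⟩ hQP => ?_⟩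
  rcases hQ.mul_le.mp hIJQ with hIQ | hJQ
  · exact hP.2 ⟨hQ, hIQ⟩ hQP
  · obtain ⟨Q', hQ', hQ'Q⟩ := exists_minimalPrimes_le hJQ
    exact absurd (hQ'Q.trans hQP) (hJ Q' hQ')

theorem minimalPrimes_mul_of_incomparable
    (h : ∀ P ∈ I.minimalPrimes, ∀ Q ∈ J.minimalPrimes, ¬P ≤ Q ∧ ¬Q ≤ P) :
    (I * J).minimalPrimes = I.minimalPrimes ∪ J.minimalPrimes := by
  refine minimalPrimes_mul_subset.antisymm (Set.union_subset (fun P hP => ?_) fun Q hQ => ?_)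
  · exact mem_minimalPrimes_mul_of_mem_minimalPrimes_left hP fun Q hQ => (h P hP Q hQ).2
  · rw [mul_comm]
    exact mem_minimalPrimes_mul_of_mem_minimalPrimes_left hQ fun P hP => (h P hP Q hQ).1

theorem span_singleton_inf_eq_mul {c : R} (hc : ∀ f, c * f ∈ J → f ∈ J) :
    span {c} ⊓ J = span {c} * J := by
  refine le_antisymm (fun x hx => ?_) mul_le_inf
  obtain ⟨f, rfl⟩ := mem_span_singleton.mp (mem_inf.mp hx).1
  exact mem_span_singleton_mul.mpr ⟨f, hc f (mem_inf.mp hx).2, rfl⟩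

end Ideal

namespace MvPolynomial

section CommSemiring

variable {σ R : Type*} [CommSemiring R]

variable (R) in
noncomputable def squarefreeMonomialIdeal (𝒜 : Set (Finset σ)) : Ideal (MvPolynomial σ R) :=
  Ideal.span ((fun A => ∏ a ∈ A, X a) '' 𝒜)

theorem mem_span_monomial_of_monomial_mul_mem {T : Set (σ →₀ ℕ)} {e : σ →₀ ℕ}
    (hT : ∀ d ∈ T, Disjoint d.support e.support) {f : MvPolynomial σ R}
    (h : monomial e 1 * f ∈ Ideal.span ((monomial · (1 : R)) '' T)) :
    f ∈ Ideal.span ((monomial · (1 : R)) '' T) := by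
  rw [mem_ideal_span_monomial_image] at h ⊢
  intro m hm
  have hem : e + m ∈ (monomial e 1 * f).support := by
    rwa [mem_support_iff, coeff_monomial_mul, one_mul, ← mem_support_iff]
  obtain ⟨d, hd, hde⟩ := h (e + m) hem
  refine ⟨d, hd, fun i => ?_⟩
  by_cases hi : i ∈ d.support
  · have hei : e i = 0 := Finsupp.notMem_support_iff.mp (Finset.disjoint_left.mp (hT d hd) hi)
    simpa [hei] using hde i
  · simp [Finsupp.notMem_support_iff.mp hi]

theorem pow_span_X_image (C : Set σ) (k : ℕ) :
    Ideal.span (X '' C : Set (MvPolynomial σ R)) ^ k =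
      Ideal.span ((monomial · 1) '' {x | x.degree = k ∧ ↑x.support ⊆ C}) := by
  rw [Ideal.span, Submodule.span_pow, Finsupp.image_pow_eq_finsuppProd_image]
  simp [monomial_eq]

theorem mem_pow_span_X_image_of_monomial_mul_mem {C : Set σ} {e : σ →₀ ℕ}
    (he : Disjoint (e.support : Set σ) C) {k : ℕ} {f : MvPolynomial σ R}
    (h : monomial e 1 * f ∈ Ideal.span (X '' C : Set (MvPolynomial σ R)) ^ k) :
    f ∈ Ideal.span (X '' C : Set (MvPolynomial σ R)) ^ k := by
  rw [pow_span_X_image] at h ⊢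
  exact mem_span_monomial_of_monomial_mul_mem
    (fun d hd => Finset.disjoint_coe.mp (he.symm.mono_left hd.2)) h

theorem X_mem_span_X_image_iff [Nontrivial R] {C : Set σ} {a : σ} :
    (X a : MvPolynomial σ R) ∈ Ideal.span (X '' C) ↔ a ∈ C := by
  simp [mem_ideal_span_X_image, support_X, Finsupp.single_apply_eq_zero]

theorem prod_X_pow_eq_monomial_sum_single (B : Finset σ) (k : ℕ) :
    (∏ b ∈ B, X b : MvPolynomial σ R) ^ k = monomial (∑ b ∈ B, Finsupp.single b k) 1 := by
  simp [← Finset.prod_pow, monomial_sum_one, X_pow_eq_monomial]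

end CommSemiring

section IsDomain

variable {σ R : Type*} [CommRing R] [IsDomain R]

theorem isPrime_span_X_image (C : Set σ) :
    (Ideal.span (X '' C : Set (MvPolynomial σ R))).IsPrime := by
  classical
  set φ : MvPolynomial σ R →ₐ[R] MvPolynomial σ R :=
    aeval fun a => if a ∈ C then 0 else X a
  have sub_mem (f : MvPolynomial σ R) : f - φ f ∈ Ideal.span (X '' C) := by
    induction f using MvPolynomial.induction_on with
    | C r => simp [φ]
    | add p q hp hq => rw [map_add, add_sub_add_comm]; exact add_mem hp hq
    | mul_X p a hp =>
      have hX : X a - φ (X a) ∈ Ideal.span (X '' C) := by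
        by_cases ha : a ∈ C
        · simpa [φ, ha] using Ideal.subset_span (Set.mem_image_of_mem X ha)
        · simp [φ, ha]
      rw [map_mul,
        show p * X a - φ p * φ (X a) = (p - φ p) * X a + φ p * (X a - φ (X a)) by ring]
      exact add_mem (Ideal.mul_mem_right _ _ hp) (Ideal.mul_mem_left _ _ hX)
  have : Ideal.span (X '' C) = RingHom.ker φ := by
    refine le_antisymm (Ideal.span_le.mpr ?_) fun f hf => ?_
    · rintro _ ⟨a, ha, rfl⟩
      simp [φ, ha]
    · simpa [RingHom.mem_ker.mp hf] using sub_mem f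
  rw [this]
  exact RingHom.ker_isPrime _

theorem exists_eq_span_X_image_of_mem_minimalPrimes {𝒜 : Set (Finset σ)}
    {P : Ideal (MvPolynomial σ R)} (hP : P ∈ (squarefreeMonomialIdeal R 𝒜).minimalPrimes) :
    ∃ C ⊆ ⋃ A ∈ 𝒜, (A : Set σ), P = Ideal.span (X '' C) := by
  have := hP.1.1
  set C := {a | X a ∈ P} ∩ ⋃ A ∈ 𝒜, (A : Set σ)
  have hCP : Ideal.span (X '' C) ≤ P :=
    Ideal.span_le.mpr (by rintro _ ⟨a, ha, rfl⟩; exact ha.1)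
  have hJC : squarefreeMonomialIdeal R 𝒜 ≤ Ideal.span (X '' C) := by
    refine Ideal.span_le.mpr ?_
    rintro _ ⟨A, hA, rfl⟩
    obtain ⟨a, haA, haP⟩ :=
      Ideal.IsPrime.prod_mem_iff.mp (hP.1.2 (Ideal.subset_span ⟨A, hA, rfl⟩))
    have haC : a ∈ C := ⟨haP, Set.mem_biUnion hA haA⟩
    exact Ideal.mem_of_dvd _ (Finset.dvd_prod_of_mem _ haA) (Ideal.subset_span ⟨a, haC, rfl⟩)
  exact ⟨C, Set.inter_subset_right,
    le_antisymm (hP.2 ⟨isPrime_span_X_image C, hJC⟩ hCP) hCP⟩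

theorem mem_symbPow_of_monomial_mul_mem {𝒜 : Set (Finset σ)} {e : σ →₀ ℕ}
    (he : ∀ A ∈ 𝒜, Disjoint e.support A) {k : ℕ} {f : MvPolynomial σ R}
    (h : monomial e 1 * f ∈ symbPow (squarefreeMonomialIdeal R 𝒜) k) :
    f ∈ symbPow (squarefreeMonomialIdeal R 𝒜) k := by
  simp only [symbPow, Submodule.mem_iInf] at h ⊢
  intro P hP
  obtain ⟨C, hC, rfl⟩ := exists_eq_span_X_image_of_mem_minimalPrimes hP
  refine mem_pow_span_X_image_of_monomial_mul_mem ?_ (h _ hP)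
  exact Set.disjoint_of_subset_right hC
    (Set.disjoint_iUnion₂_right.mpr fun A hA => Finset.disjoint_coe.mpr (he A hA))

theorem minimalPrimes_span_prod_X (B : Finset σ) :
    (Ideal.span {∏ b ∈ B, (X b : MvPolynomial σ R)}).minimalPrimes =
      (fun b => Ideal.span {X b}) '' B := by
  have isPrime (b : σ) : (Ideal.span {(X b : MvPolynomial σ R)}).IsPrime :=
    (Ideal.span_singleton_prime (X_ne_zero b)).mpr X_prime
  have prod_mem {b : σ} (hb : b ∈ B) :
      ∏ c ∈ B, (X c : MvPolynomial σ R) ∈ Ideal.span {X b} :=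
    Ideal.mem_span_singleton.mpr (Finset.dvd_prod_of_mem _ hb)
  ext P
  constructor
  · intro hP
    have := hP.1.1
    obtain ⟨b, hb, hbP⟩ :=
      Ideal.IsPrime.prod_mem_iff.mp (hP.1.2 (Ideal.mem_span_singleton_self _))
    have hbP' : Ideal.span {X b} ≤ P := (Ideal.span_singleton_le_iff_mem _).mpr hbP
    exact ⟨b, hb, le_antisymm hbP'
      (hP.2 ⟨isPrime b, (Ideal.span_singleton_le_iff_mem _).mpr (prod_mem hb)⟩ hbP')⟩
  · rintro ⟨b, hb, rfl⟩
    refine ⟨⟨isPrime b, (Ideal.span_singleton_le_iff_mem _).mpr (prod_mem hb)⟩,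
      fun Q ⟨hQ, hwQ⟩ hQb => ?_⟩
    obtain ⟨c, -, hcQ⟩ :=
      Ideal.IsPrime.prod_mem_iff.mp ((Ideal.span_singleton_le_iff_mem _).mp hwQ)
    obtain rfl := (Ideal.mem_span_singleton.trans X_dvd_X).mp (hQb hcQ)
    exact (Ideal.span_singleton_le_iff_mem _).mpr hcQ

end IsDomain

section UniqueFactorizationMonoid

variable {σ R : Type*} [CommRing R] [IsDomain R] [UniqueFactorizationMonoid R]

theorem iInf_span_X_pow (B : Finset σ) (k : ℕ) :
    ⨅ b ∈ (B : Set σ), Ideal.span {(X b : MvPolynomial σ R)} ^ k =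
      Ideal.span {(∏ b ∈ B, X b) ^ k} := by
  ext f
  simp only [Submodule.mem_iInf, Ideal.span_singleton_pow, Ideal.mem_span_singleton,
    ← Finset.prod_pow, Finset.mem_coe]
  refine ⟨fun h => Finset.prod_dvd_of_isRelPrime ?_ h,
    fun h b hb => (Finset.dvd_prod_of_mem _ hb).trans h⟩
  intro b _ c _ hbc
  exact (X_prime.irreducible.isRelPrime_iff_not_dvd.mpr (X_dvd_X.not.mpr hbc)).pow

theorem symbPow_span_prod_X_mul {𝒜 : Set (Finset σ)} (h𝒜 : 𝒜.Nonempty) {B : Finset σ}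
    (hB : ∀ A ∈ 𝒜, Disjoint B A) (k : ℕ) :
    symbPow (Ideal.span {∏ b ∈ B, X b} * squarefreeMonomialIdeal R 𝒜) k =
      Ideal.span {(∏ b ∈ B, X b) ^ k} * symbPow (squarefreeMonomialIdeal R 𝒜) k := by
  classical
  have incomparable : ∀ P ∈ (Ideal.span {∏ b ∈ B, (X b : MvPolynomial σ R)}).minimalPrimes,
      ∀ Q ∈ (squarefreeMonomialIdeal R 𝒜).minimalPrimes, ¬P ≤ Q ∧ ¬Q ≤ P := by
    rw [minimalPrimes_span_prod_X]
    rintro _ ⟨b, hb, rfl⟩ Q hQ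
    obtain ⟨C, hC, rfl⟩ := exists_eq_span_X_image_of_mem_minimalPrimes hQ
    constructor
    · rw [Ideal.span_singleton_le_iff_mem, X_mem_span_X_image_iff]
      intro hbC
      obtain ⟨A, hA, hbA⟩ := Set.mem_iUnion₂.mp (hC hbC)
      exact Finset.disjoint_left.mp (hB A hA) hb hbA
    · intro hCb
      obtain ⟨A, hA⟩ := h𝒜
      have hAb := hCb (hQ.1.2 (Ideal.subset_span ⟨A, hA, rfl⟩))
      rw [Ideal.mem_span_singleton, X_prime.dvd_finsetProd_iff] at hAb
      obtain ⟨a, haA, hba⟩ := hAb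
      exact Finset.disjoint_left.mp (hB A hA) hb (X_dvd_X.mp hba ▸ haA)
  have colon (f : MvPolynomial σ R)
      (hf : (∏ b ∈ B, X b) ^ k * f ∈ symbPow (squarefreeMonomialIdeal R 𝒜) k) :
      f ∈ symbPow (squarefreeMonomialIdeal R 𝒜) k := by
    rw [prod_X_pow_eq_monomial_sum_single] at hf
    refine mem_symbPow_of_monomial_mul_mem (fun A hA => ?_) hf
    refine Finset.disjoint_of_subset_left (Finsupp.support_finsetSum.trans ?_) (hB A hA)
    exact Finset.biUnion_subset.mpr fun b hb =>
      Finsupp.support_single_subset.trans (Finset.singleton_subset_iff.mpr hb)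
  rw [symbPow, Ideal.minimalPrimes_mul_of_incomparable incomparable, minimalPrimes_span_prod_X,
    _root_.iInf_union, iInf_image, iInf_span_X_pow]
  exact Ideal.span_singleton_inf_eq_mul colon

end UniqueFactorizationMonoid

end MvPolynomial

/-- **Lemma.** Let `J` be a squarefree monomial ideal, `w = ∏_{b ∈ B} x_b` a squarefree
monomial whose variables are disjoint from those of the (minimal) monomial generators of
`J`, and `I = wJ`.  Then `I^(k) = I^k` for all `k ≥ 1` iff `J^(k) = J^k` for all `k ≥ 1`. -/
theorem stmt9 (K : Type*) [Field K] (n : ℕ) (𝒜 : Set (Finset (Fin n)))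
    (B : Finset (Fin n)) (J I : Ideal (MvPolynomial (Fin n) K))
    (hJ : J = Ideal.span ((fun A => ∏ a ∈ A, MvPolynomial.X a) '' 𝒜))
    (hI : I = Ideal.span {(∏ a ∈ B, MvPolynomial.X a : MvPolynomial (Fin n) K)} * J)
    (hdisj : ∀ A ∈ 𝒜, Disjoint B A) :
    (∀ k : ℕ, 1 ≤ k → symbPow I k = I ^ k) ↔ (∀ k : ℕ, 1 ≤ k → symbPow J k = J ^ k) := by
  obtain rfl : J = squarefreeMonomialIdeal K 𝒜 := hJ
  subst hI
  obtain rfl | h𝒜 := 𝒜.eq_empty_or_nonempty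
  · simp [squarefreeMonomialIdeal]
  refine forall₂_congr fun k _ => ?_
  have hw : (∏ b ∈ B, X b : MvPolynomial (Fin n) K) ^ k ≠ 0 :=
    pow_ne_zero _ (Finset.prod_ne_zero_iff.mpr fun b _ => X_ne_zero b)
  rw [symbPow_span_prod_X_mul h𝒜 hdisj, mul_pow, Ideal.span_singleton_pow,
    Ideal.span_singleton_mul_right_inj hw]
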